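/- Let M be the Coxeter matrix on the index set {1,...,4} ⊔ {1,...,4} (eight generators, the first four corresponding to S_1,...,S_4 and the last four to S_1ᵀ,...,S_4ᵀ) defined by: M(x,x) = 1 for every generator x; M(S_i, S_jᵀ) = M(S_jᵀ, S_i) = 2 whenever i ≠ j; and all other off-diagonal entries equal to ∞ (no relation). Then the group homomorphism from the Coxeter group of M to GL(4,ℝ) sending the i-th generator of the first block to S_i and the i-th generator of the second block to S_iᵀ (which exists because these matrices satisfy the Coxeter relations of M) is injective. Hence the super-Apollonian group ⟨S_1,...,S_4,S_1ᵀ,...,S_4ᵀ⟩ is a Coxeter group with presentation given by the relations S_i² = (S_iᵀ)² = I and (S_i·S_jᵀ)² = I for i ≠ j. -/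

import Mathlib

open Matrix

/-- The Apollonian generators `S₁, S₂, S₃, S₄`. -/
noncomputable def S : Fin 4 → Matrix (Fin 4) (Fin 4) ℝ := fun i =>
  Matrix.of fun j k =>
    if j = i then (if k = i then -1 else 2) else (if j = k then 1 else 0)

/-- The Coxeter matrix of the super-Apollonian group, on eight generators
indexed by `Fin 4 ⊕ Fin 4` (the first block corresponding to `S₁,...,S₄` and
the second to `S₁ᵀ,...,S₄ᵀ`): each generator is an involution, `S i` and `S jᵀ`
commute for `i ≠ j` (order `2`), and all other products have infinite order
(recorded as `0`). -/
def superApollonianCoxeterMatrix : CoxeterMatrix (Fin 4 ⊕ Fin 4) where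
  M := Matrix.of fun x y =>
    if x = y then 1
    else
      match x, y with
      | Sum.inl i, Sum.inr j => if i = j then 0 else 2
      | Sum.inr i, Sum.inl j => if i = j then 0 else 2
      | _, _ => 0
  isSymm := by decide
  diagonal := by decide
  off_diagonal := by
    intro i i' h
    rcases i with i | i <;> rcases i' with i' | i' <;> simp only [of_apply, if_neg h] <;>
      (try split_ifs) <;> decide

/-!
`S i` acts on `ℝ⁴` as the reflection in the hyperplane `2 x i = ∑ x` and `(S i)ᵀ` as the
reflection in `x i = 0`; the vector `1` lies strictly on the side `2 x i < ∑ x`, `0 < x i` of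
all eight hyperplanes. Apply a reduced word to `1`, letter by letter from the right, and record
which generator of each block would cancel against the next letter. By induction, the image
satisfies a quantitative version of "it lies beyond the hyperplanes of the recorded generators
and on the side of `1` of all the others", and this fails for `1` itself as soon as something
is recorded, that is, for every nonempty word. So no nonempty reduced word maps to the identity.
-/

namespace CoxeterSystem

variable {B W : Type*} [Group W] {M : CoxeterMatrix B} (cs : CoxeterSystem M W)

theorem commute_simple_of_M_eq_two {i i' : B} (h : M i i' = 2) :
    Commute (cs.simple i) (cs.simple i') := by
  have hsq := cs.simple_mul_simple_pow i i'
  rwa [h, pow_two, mul_eq_one_iff_eq_inv, _root_.mul_inv_rev, inv_simple, inv_simple] at hsq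

theorem not_isReduced_cons_append_cons {i : B} {u r : List B} (hu : ∀ j ∈ u, M i j = 2) :
    ¬cs.IsReduced (i :: (u ++ i :: r)) := by
  have hcomm : Commute (cs.simple i) (cs.wordProd u) :=
    Commute.list_prod_right _ _ fun _ hj ↦ by
      obtain ⟨j, hju, rfl⟩ := List.mem_map.1 hj
      exact cs.commute_simple_of_M_eq_two (hu j hju)
  have hprod : cs.wordProd (i :: (u ++ i :: r)) = cs.wordProd (u ++ r) := by
    rw [wordProd_cons, wordProd_append, wordProd_cons, ← mul_assoc, hcomm.eq, mul_assoc,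
      simple_mul_simple_cancel_left, wordProd_append]
  intro hred
  have hlen := cs.length_wordProd_le (u ++ r)
  rw [← hprod, hred.eq] at hlen
  simp at hlen

end CoxeterSystem

namespace SuperApollonian

section MulVec

variable (i : Fin 4) (x : Fin 4 → ℝ)

theorem S_mulVec_self : (S i *ᵥ x) i = 2 * ∑ k, x k - 3 * x i := by
  fin_cases i <;> simp [S, mulVec, dotProduct, Fin.sum_univ_four] <;> ring

theorem S_mulVec_of_ne {j : Fin 4} (hj : j ≠ i) : (S i *ᵥ x) j = x j := by
  simp [S, mulVec, dotProduct, hj]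

theorem sum_S_mulVec : ∑ k, (S i *ᵥ x) k = 3 * ∑ k, x k - 4 * x i := by
  fin_cases i <;> simp [S, mulVec, dotProduct, Fin.sum_univ_four] <;> ring

theorem transpose_S_mulVec_self : ((S i)ᵀ *ᵥ x) i = -x i := by
  fin_cases i <;> simp [S, mulVec, dotProduct, Fin.sum_univ_four]

theorem transpose_S_mulVec_of_ne {j : Fin 4} (hj : j ≠ i) :
    ((S i)ᵀ *ᵥ x) j = x j + 2 * x i := by
  fin_cases i <;> fin_cases j <;> simp_all [S, mulVec, dotProduct, Fin.sum_univ_four] <;> ring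

theorem sum_transpose_S_mulVec : ∑ k, ((S i)ᵀ *ᵥ x) k = ∑ k, x k + 4 * x i := by
  fin_cases i <;> simp [S, mulVec, dotProduct, Fin.sum_univ_four] <;> ring

end MulVec

theorem exists_distinct_of_ne {p i : Fin 4} (hpi : p ≠ i) :
    ∃ u w, u ≠ p ∧ w ≠ p ∧ u ≠ w ∧ u ≠ i ∧ w ≠ i := by
  revert p i; decide

theorem sum_eq_add_add_add (x : Fin 4 → ℝ) {p i u w : Fin 4} (hpi : p ≠ i) (hup : u ≠ p)
    (hwp : w ≠ p) (huw : u ≠ w) (hui : u ≠ i) (hwi : w ≠ i) :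
    ∑ k, x k = x p + x i + x u + x w := by
  have huniv : (Finset.univ : Finset (Fin 4)) = {p, i, u, w} := by
    revert p i u w; decide
  rw [huniv, Finset.sum_insert (by simp [hpi, hup.symm, hwp.symm]),
    Finset.sum_insert (by simp [hui.symm, hwi.symm]), Finset.sum_pair huw, add_assoc, add_assoc]

/-- `a = some p` records that prepending `S p` to the word would cancel a letter, `b = some q`
the same for `(S q)ᵀ`; an index `j` is free when neither is recorded. -/
structure Invariant (x : Fin 4 → ℝ) (a b : Option (Fin 4)) : Prop where
  four_le_sum : 4 ≤ ∑ k, x k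
  free : ∀ j, a ≠ some j → b ≠ some j → 1 ≤ x j ∧ 2 * x j + 2 ≤ ∑ k, x k
  left : ∀ p, a = some p → ∑ k, x k + 2 ≤ 2 * x p
  right : ∀ q, b = some q → x q ≤ -1
  right_free : ∀ q j, b = some q → a ≠ some j → b ≠ some j → 2 ≤ x q + x j
  right_sum : ∀ q, b = some q → 4 ≤ ∑ k, x k + 4 * x q
  left_right : ∀ p q, a = some p → b = some q → 3 ≤ x p + 2 * x q

theorem invariant_one : Invariant 1 none none where
  four_le_sum := by norm_num
  free _ _ _ := by norm_num
  left _ := nofun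
  right _ := nofun
  right_free _ _ := nofun
  right_sum _ := nofun
  left_right _ _ := nofun

namespace Invariant

variable {x : Fin 4 → ℝ} {a b : Option (Fin 4)}

theorem two_mul_add_two_le_sum (h : Invariant x a b) {i : Fin 4} (hi : a ≠ some i) :
    2 * x i + 2 ≤ ∑ k, x k := by
  by_cases hb : b = some i
  · linarith [h.right i hb, h.right_sum i hb]
  · exact (h.free i hi hb).2

theorem two_le_add (h : Invariant x a b) {p u w : Fin 4} (hp : a = some p) (hu : u ≠ p)
    (hw : w ≠ p) (huw : u ≠ w) : 2 ≤ x u + x w := by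
  have hau : a ≠ some u := by simp [hp, Ne.symm hu]
  have haw : a ≠ some w := by simp [hp, Ne.symm hw]
  by_cases hbu : b = some u
  · exact h.right_free u w hbu haw (by simp [hbu, huw])
  by_cases hbw : b = some w
  · linarith [h.right_free w u hbw hau (by simp [hbw, Ne.symm huw])]
  linarith [(h.free u hau hbu).1, (h.free w haw hbw).1]

theorem add_add_two_le_sum (h : Invariant x a b) {p i : Fin 4} (hp : a = some p) (hi : i ≠ p) :
    x p + x i + 2 ≤ ∑ k, x k := by
  obtain ⟨u, w, hup, hwp, huw, hui, hwi⟩ := exists_distinct_of_ne hi.symm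
  rw [sum_eq_add_add_add x hi.symm hup hwp huw hui hwi]
  linarith [h.two_le_add hp hup hwp huw]

theorem S_mulVec (h : Invariant x a b) {i : Fin 4} (hai : a ≠ some i) :
    Invariant (S i *ᵥ x) (some i) (b.filter (· ≠ i)) := by
  have hi := h.two_mul_add_two_le_sum hai
  have hsum := sum_S_mulVec i x
  have hself := S_mulVec_self i x
  have h4 := h.four_le_sum
  constructor
  · linarith
  · intro j hij hbj
    have hji : j ≠ i := by simpa [eq_comm] using hij
    have hbj : b ≠ some j := by simpa [hji] using hbj
    rw [S_mulVec_of_ne i x hji, hsum]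
    by_cases haj : a = some j
    · have := h.left j haj
      have := h.add_add_two_le_sum haj hji.symm
      constructor <;> linarith
    · have := h.free j haj hbj
      constructor <;> linarith
  · rintro p ⟨⟩
    rw [hsum, hself]
    linarith
  · intro q hq
    obtain ⟨hbq, hqi⟩ : b = some q ∧ q ≠ i := by simpa using hq
    rw [S_mulVec_of_ne i x hqi]
    exact h.right q hbq
  · intro q j hq hij hbj
    obtain ⟨hbq, hqi⟩ : b = some q ∧ q ≠ i := by simpa using hq
    have hji : j ≠ i := by simpa [eq_comm] using hij
    have hbj : b ≠ some j := by simpa [hji] using hbj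
    rw [S_mulVec_of_ne i x hqi, S_mulVec_of_ne i x hji]
    by_cases haj : a = some j
    · linarith [h.left_right j q haj hbq, h.right q hbq]
    · exact h.right_free q j hbq haj hbj
  · intro q hq
    obtain ⟨hbq, hqi⟩ : b = some q ∧ q ≠ i := by simpa using hq
    rw [S_mulVec_of_ne i x hqi, hsum]
    linarith [h.right_sum q hbq]
  · rintro p q ⟨⟩ hq
    obtain ⟨hbq, hqi⟩ : b = some q ∧ q ≠ i := by simpa using hq
    rw [S_mulVec_of_ne i x hqi, hself]
    linarith [h.right_sum q hbq]

theorem transpose_S_mulVec (h : Invariant x a b) {i : Fin 4} (hbi : b ≠ some i) :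
    Invariant ((S i)ᵀ *ᵥ x) (a.filter (· ≠ i)) (some i) := by
  have hsum := sum_transpose_S_mulVec i x
  have hself := transpose_S_mulVec_self i x
  have h4 := h.four_le_sum
  have hxi : 1 ≤ x i := by
    by_cases hai : a = some i
    · linarith [h.left i hai]
    · exact (h.free i hai hbi).1
  have hfree : ∀ j, j ≠ i → a ≠ some j →
      1 ≤ x j + 2 * x i ∧ 2 ≤ x i + x j ∧ 2 * x j + 2 ≤ ∑ k, x k := by
    intro j hji haj
    by_cases hbj : b = some j
    · have := h.right j hbj
      by_cases hai : a = some i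
      · have := h.left_right i j hai hbj
        have := h.left i hai
        refine ⟨?_, ?_, ?_⟩ <;> linarith
      · have := h.right_free j i hbj hai hbi
        refine ⟨?_, ?_, ?_⟩ <;> linarith
    · have := h.free j haj hbj
      refine ⟨?_, ?_, ?_⟩ <;> linarith
  constructor
  · linarith
  · intro j haj hij
    have hji : j ≠ i := by simpa [eq_comm] using hij
    have haj : a ≠ some j := by simpa [hji] using haj
    have := hfree j hji haj
    rw [transpose_S_mulVec_of_ne i x hji, hsum]
    constructor <;> linarith
  · intro p hp
    obtain ⟨hap, hpi⟩ : a = some p ∧ p ≠ i := by simpa using hp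
    rw [transpose_S_mulVec_of_ne i x hpi, hsum]
    linarith [h.left p hap]
  · rintro q ⟨⟩
    rw [hself]
    linarith
  · rintro q j ⟨⟩ - hij
    have hji : j ≠ i := by simpa [eq_comm] using hij
    rw [hself, transpose_S_mulVec_of_ne i x hji]
    by_cases haj : a = some j
    · linarith [h.left j haj]
    · linarith [hfree j hji haj]
  · rintro q ⟨⟩
    rw [hsum, hself]
    linarith
  · rintro p q hp ⟨⟩
    obtain ⟨hap, hpi⟩ : a = some p ∧ p ≠ i := by simpa using hp
    rw [transpose_S_mulVec_of_ne i x hpi, hself]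
    linarith [h.left p hap]

end Invariant

abbrev coxeterSystem :
    CoxeterSystem superApollonianCoxeterMatrix superApollonianCoxeterMatrix.Group :=
  superApollonianCoxeterMatrix.toCoxeterSystem

noncomputable def generator : Fin 4 ⊕ Fin 4 → Matrix (Fin 4) (Fin 4) ℝ :=
  Sum.elim S fun i ↦ (S i)ᵀ

/-- `inlDescent ω = some i` when `ω` begins with `Sum.inl i` up to letters commuting with it. -/
def inlDescent : List (Fin 4 ⊕ Fin 4) → Option (Fin 4)
  | [] => none
  | .inl i :: _ => some i
  | .inr i :: ω => (inlDescent ω).filter (· ≠ i)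

def inrDescent : List (Fin 4 ⊕ Fin 4) → Option (Fin 4)
  | [] => none
  | .inr i :: _ => some i
  | .inl i :: ω => (inrDescent ω).filter (· ≠ i)

theorem superApollonianCoxeterMatrix_inl_inr {i j : Fin 4} (h : i ≠ j) :
    superApollonianCoxeterMatrix.M (.inl i) (.inr j) = 2 := by
  simp [superApollonianCoxeterMatrix, h]

theorem superApollonianCoxeterMatrix_inr_inl {i j : Fin 4} (h : i ≠ j) :
    superApollonianCoxeterMatrix.M (.inr i) (.inl j) = 2 := by
  simp [superApollonianCoxeterMatrix, h]

theorem exists_eq_append_of_inlDescent_eq_some {i : Fin 4} :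
    ∀ {ω : List (Fin 4 ⊕ Fin 4)}, inlDescent ω = some i → ∃ u r, ω = u ++ .inl i :: r ∧
      ∀ c ∈ u, superApollonianCoxeterMatrix.M (.inl i) c = 2
  | .inl j :: ω, h => ⟨[], ω, by simp_all [inlDescent], by simp⟩
  | .inr j :: ω, h => by
    obtain ⟨hω, hij⟩ : inlDescent ω = some i ∧ i ≠ j := by simpa [inlDescent] using h
    obtain ⟨u, r, rfl, hu⟩ := exists_eq_append_of_inlDescent_eq_some hω
    exact ⟨.inr j :: u, r, rfl, by simpa [superApollonianCoxeterMatrix_inl_inr hij] using hu⟩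

theorem exists_eq_append_of_inrDescent_eq_some {i : Fin 4} :
    ∀ {ω : List (Fin 4 ⊕ Fin 4)}, inrDescent ω = some i → ∃ u r, ω = u ++ .inr i :: r ∧
      ∀ c ∈ u, superApollonianCoxeterMatrix.M (.inr i) c = 2
  | .inr j :: ω, h => ⟨[], ω, by simp_all [inrDescent], by simp⟩
  | .inl j :: ω, h => by
    obtain ⟨hω, hij⟩ : inrDescent ω = some i ∧ i ≠ j := by simpa [inrDescent] using h
    obtain ⟨u, r, rfl, hu⟩ := exists_eq_append_of_inrDescent_eq_some hω
    exact ⟨.inl j :: u, r, rfl, by simpa [superApollonianCoxeterMatrix_inr_inl hij] using hu⟩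

theorem invariant_of_isReduced :
    ∀ {ω : List (Fin 4 ⊕ Fin 4)}, coxeterSystem.IsReduced ω →
      Invariant ((ω.map generator).prod *ᵥ 1) (inlDescent ω) (inrDescent ω)
  | [], _ => by simpa [inlDescent, inrDescent] using invariant_one
  | c :: ω, hred => by
    have ih := invariant_of_isReduced (hred.drop 1)
    rw [List.map_cons, List.prod_cons, ← mulVec_mulVec]
    rcases c with i | i
    · refine ih.S_mulVec fun h ↦ ?_
      obtain ⟨u, r, rfl, hu⟩ := exists_eq_append_of_inlDescent_eq_some h
      exact coxeterSystem.not_isReduced_cons_append_cons hu hred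
    · refine ih.transpose_S_mulVec fun h ↦ ?_
      obtain ⟨u, r, rfl, hu⟩ := exists_eq_append_of_inrDescent_eq_some h
      exact coxeterSystem.not_isReduced_cons_append_cons hu hred

theorem not_invariant_one_cons (c : Fin 4 ⊕ Fin 4) (ω : List (Fin 4 ⊕ Fin 4)) :
    ¬Invariant 1 (inlDescent (c :: ω)) (inrDescent (c :: ω)) := by
  intro h
  rcases c with i | i
  · have := h.left i rfl
    norm_num at this
  · have := h.right i rfl
    norm_num at this

end SuperApollonian

open SuperApollonian in
/-- The super-Apollonian group is a Coxeter group: the homomorphism from the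
Coxeter group of `superApollonianCoxeterMatrix` to `GL(4, ℝ)` sending the
generators of the first block to the Apollonian generators `S i` and those of
the second block to the dual generators `S iᵀ` is injective. Hence the
super-Apollonian group has the presentation with relations
`S i² = (S iᵀ)² = I` and `(S i · S jᵀ)² = I` for `i ≠ j`. -/
theorem superApollonian_is_coxeter
    (φ : superApollonianCoxeterMatrix.Group →* GL (Fin 4) ℝ)
    (hS : ∀ i : Fin 4,
      (φ (superApollonianCoxeterMatrix.simple (Sum.inl i)) :
        Matrix (Fin 4) (Fin 4) ℝ) = S i)
    (hST : ∀ i : Fin 4,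
      (φ (superApollonianCoxeterMatrix.simple (Sum.inr i)) :
        Matrix (Fin 4) (Fin 4) ℝ) = (S i)ᵀ) :
    Function.Injective φ := by
  have hword (ω : List (Fin 4 ⊕ Fin 4)) :
      (φ (coxeterSystem.wordProd ω) : Matrix (Fin 4) (Fin 4) ℝ) = (ω.map generator).prod := by
    rw [← Units.coeHom_apply, ← MonoidHom.comp_apply, CoxeterSystem.wordProd, map_list_prod,
      List.map_map]
    congr 1
    refine List.map_congr_left fun c _ ↦ ?_
    rcases c with i | i
    exacts [hS i, hST i]
  refine (injective_iff_map_eq_one φ).2 fun w hw ↦ ?_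
  obtain ⟨ω, hred, rfl⟩ := coxeterSystem.exists_isReduced w
  rcases ω with _ | ⟨c, ω⟩
  · exact coxeterSystem.wordProd_nil
  have h := invariant_of_isReduced hred
  rw [← hword, hw, Units.val_one, one_mulVec] at h
  exact (not_invariant_one_cons c ω h).elim
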